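/- Let Ω ⊆ ℝ² be open, v ∈ C^∞(Ω), β ∈ ℝ, and let x ∈ Ω be a point with Dv(x) ≠ 0. Let G(y) = |Dv(y)|^{β} Dv(y), which is C¹ on a neighborhood of x. Then −det DG(x) = (β + 1) |Dv(x)|^{2β−2} ( |D²v(x) Dv(x)|² − Δv(x) Δ∞v(x) ). -/

import Mathlib

/-!
Writing `G = |Dv|^β Dv`, the product and chain rules give
`∂ᵢGⱼ = |Dv|^(β-2) (|Dv|² vᵢⱼ + β (D²v Dv)ᵢ vⱼ)`, a rank-one perturbation of `|Dv|^β D²v`.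
Because the perturbation is built from `D²v Dv`, its contribution to the determinant is
`β |Dv|^(2β) det D²v`, so `det DG = (β + 1) |Dv|^(2β) det D²v`. In the plane, Cayley–Hamilton
for the symmetric matrix `D²v` gives `|D²v Dv|² - Δv Δ∞v = -|Dv|² det D²v`, and the two identities
combine to the claim.
-/

open Real MeasureTheory
open scoped RealInnerProductSpace

noncomputable section

/-- The Euclidean plane ℝ². -/
abbrev E2 : Type := EuclideanSpace ℝ (Fin 2)

/-- Standard basis vector. -/
def ee (i : Fin 2) : E2 := EuclideanSpace.single i (1 : ℝ)

/-- Partial derivative ∂ᵢf. -/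
def pd (i : Fin 2) (f : E2 → ℝ) (x : E2) : ℝ := fderiv ℝ f x (ee i)

/-- Second partial derivative ∂ᵢ∂ⱼf. -/
def pd2 (i j : Fin 2) (f : E2 → ℝ) (x : E2) : ℝ := pd i (pd j f) x

/-- |Df|², squared Euclidean norm of the gradient. -/
def gradSq (f : E2 → ℝ) (x : E2) : ℝ := (pd 0 f x) ^ 2 + (pd 1 f x) ^ 2

/-- |Df|, Euclidean norm of the gradient. -/
def gradNorm (f : E2 → ℝ) (x : E2) : ℝ := Real.sqrt (gradSq f x)

/-- Laplacian Δf = tr D²f. -/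
def lap (f : E2 → ℝ) (x : E2) : ℝ := pd2 0 0 f x + pd2 1 1 f x

/-- ∞-Laplacian Δ∞f = D²f Df · Df. -/
def infLap (f : E2 → ℝ) (x : E2) : ℝ :=
  pd2 0 0 f x * pd 0 f x * pd 0 f x + pd2 0 1 f x * pd 0 f x * pd 1 f x +
  pd2 1 0 f x * pd 1 f x * pd 0 f x + pd2 1 1 f x * pd 1 f x * pd 1 f x

/-- |D²f|², squared Frobenius norm of the Hessian. -/
def hessFrobSq (f : E2 → ℝ) (x : E2) : ℝ :=
  (pd2 0 0 f x) ^ 2 + (pd2 0 1 f x) ^ 2 + (pd2 1 0 f x) ^ 2 + (pd2 1 1 f x) ^ 2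

/-- det D²f, determinant of the Hessian. -/
def detHess (f : E2 → ℝ) (x : E2) : ℝ :=
  pd2 0 0 f x * pd2 1 1 f x - pd2 0 1 f x * pd2 1 0 f x

/-- |D²f Df|². -/
def hessGradSq (f : E2 → ℝ) (x : E2) : ℝ :=
  (pd2 0 0 f x * pd 0 f x + pd2 0 1 f x * pd 1 f x) ^ 2 +
  (pd2 1 0 f x * pd 0 f x + pd2 1 1 f x * pd 1 f x) ^ 2

/-- Jacobian determinant of the planar map with components `F 0`, `F 1`. -/
def jdet (F : Fin 2 → E2 → ℝ) (x : E2) : ℝ :=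
  pd 0 (F 0) x * pd 1 (F 1) x - pd 1 (F 0) x * pd 0 (F 1) x

/-- Squared Frobenius norm of the Jacobian of the planar map with components `F 0`, `F 1`. -/
def jFrobSq (F : Fin 2 → E2 → ℝ) (x : E2) : ℝ :=
  (pd 0 (F 0) x) ^ 2 + (pd 1 (F 0) x) ^ 2 + (pd 0 (F 1) x) ^ 2 + (pd 1 (F 1) x) ^ 2

/-- Df · Dg. -/
def gradDot (f g : E2 → ℝ) (x : E2) : ℝ :=
  pd 0 f x * pd 0 g x + pd 1 f x * pd 1 g x

/-- D²ψ Dv · Dv. -/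
def hessQuad (ψ v : E2 → ℝ) (x : E2) : ℝ :=
  pd2 0 0 ψ x * pd 0 v x * pd 0 v x + pd2 0 1 ψ x * pd 0 v x * pd 1 v x +
  pd2 1 0 ψ x * pd 1 v x * pd 0 v x + pd2 1 1 ψ x * pd 1 v x * pd 1 v x

/-- (D²v Dv) · Dψ. -/
def hessGradDot (v ψ : E2 → ℝ) (x : E2) : ℝ :=
  (pd2 0 0 v x * pd 0 v x + pd2 0 1 v x * pd 1 v x) * pd 0 ψ x +
  (pd2 1 0 v x * pd 0 v x + pd2 1 1 v x * pd 1 v x) * pd 1 ψ x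

/-- Smooth compactly supported test function on Ω. -/
def IsTestOn (ψ : E2 → ℝ) (Ω : Set E2) : Prop :=
  ContDiff ℝ (⊤ : ℕ∞) ψ ∧ HasCompactSupport ψ ∧ tsupport ψ ⊆ Ω

/-- Components of W = |Dv|⁻¹ Dv. -/
def Wcomp (v : E2 → ℝ) (i : Fin 2) : E2 → ℝ := fun y => (gradNorm v y)⁻¹ * pd i v y

def hessGrad (f : E2 → ℝ) (i : Fin 2) (x : E2) : ℝ :=
  pd2 i 0 f x * pd 0 f x + pd2 i 1 f x * pd 1 f x

section

variable {v : E2 → ℝ} {x : E2}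

theorem differentiableAt_fderiv_of_contDiffAt_two (hv : ContDiffAt ℝ 2 v x) :
    DifferentiableAt ℝ (fderiv ℝ v) x :=
  (hv.fderiv_right (m := 1) le_rfl).differentiableAt one_ne_zero

theorem pd2_eq_fderiv_fderiv (hv : ContDiffAt ℝ 2 v x) (i j : Fin 2) :
    pd2 i j v x = fderiv ℝ (fderiv ℝ v) x (ee i) (ee j) := by
  change fderiv ℝ (fun y => fderiv ℝ v y (ee j)) x (ee i) = _
  rw [fderiv_clm_apply (differentiableAt_fderiv_of_contDiffAt_two hv) (differentiableAt_const _)]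
  simp

theorem pd2_comm (hv : ContDiffAt ℝ 2 v x) (i j : Fin 2) : pd2 i j v x = pd2 j i v x := by
  rw [pd2_eq_fderiv_fderiv hv, pd2_eq_fderiv_fderiv hv,
    hv.isSymmSndFDerivAt (by simp [minSmoothness_of_isRCLikeNormedField])]

theorem hasFDerivAt_pd (hv : ContDiffAt ℝ 2 v x) (j : Fin 2) :
    HasFDerivAt (pd j v) (fderiv ℝ (pd j v) x) x :=
  ((differentiableAt_fderiv_of_contDiffAt_two hv).clm_apply
    (differentiableAt_const (ee j))).hasFDerivAt

theorem fderiv_pd_apply (i j : Fin 2) : fderiv ℝ (pd j v) x (ee i) = pd2 i j v x := rfl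

theorem hasFDerivAt_gradSq (hv : ContDiffAt ℝ 2 v x) :
    HasFDerivAt (gradSq v)
      ((2 * pd 0 v x) • fderiv ℝ (pd 0 v) x + (2 * pd 1 v x) • fderiv ℝ (pd 1 v) x) x :=
  (((hasFDerivAt_pd hv 0).pow 2).add ((hasFDerivAt_pd hv 1).pow 2)).congr_fderiv (by simp)

theorem gradSq_nonneg (x : E2) : 0 ≤ gradSq v x := by
  unfold gradSq; positivity

theorem sq_gradNorm (x : E2) : gradNorm v x ^ 2 = gradSq v x :=
  Real.sq_sqrt (gradSq_nonneg x)

theorem gradNorm_pos (hgrad : gradSq v x ≠ 0) : 0 < gradNorm v x :=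
  Real.sqrt_pos.mpr ((gradSq_nonneg x).lt_of_ne' hgrad)

theorem hasFDerivAt_gradNorm (hv : ContDiffAt ℝ 2 v x) (hgrad : gradSq v x ≠ 0) :
    HasFDerivAt (gradNorm v)
      ((gradNorm v x)⁻¹ • (pd 0 v x • fderiv ℝ (pd 0 v) x + pd 1 v x • fderiv ℝ (pd 1 v) x)) x :=
  ((hasFDerivAt_gradSq hv).sqrt hgrad).congr_fderiv <| by
    ext u
    simp [gradNorm]
    ring

theorem pd_rpow_gradNorm_mul_pd (hv : ContDiffAt ℝ 2 v x) (hgrad : gradSq v x ≠ 0) (β : ℝ)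
    (i j : Fin 2) :
    pd i (fun y => gradNorm v y ^ β * pd j v y) x
      = gradNorm v x ^ (β - 2) * (gradSq v x * pd2 i j v x + β * hessGrad v i x * pd j v x) := by
  have hn := gradNorm_pos hgrad
  have hG : HasFDerivAt (fun y => gradNorm v y ^ β * pd j v y) _ x :=
    ((hasFDerivAt_gradNorm hv hgrad).rpow_const (Or.inl hn.ne')).mul (hasFDerivAt_pd hv j)
  set n := gradNorm v x
  have hβ : n ^ β = n ^ (β - 2) * gradSq v x := by
    rw [← sq_gradNorm, ← rpow_natCast, ← rpow_add hn]; norm_num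
  have hβ1 : n ^ (β - 1) = n ^ (β - 2) * n := by
    rw [← rpow_add_one hn.ne']; ring_nf
  rw [pd, hG.fderiv]
  simp only [add_apply, smul_apply, smul_eq_mul, fderiv_pd_apply]
  rw [hβ, hβ1, hessGrad]
  field_simp

theorem hessGradSq_sub_lap_mul_infLap (hsymm : pd2 1 0 v x = pd2 0 1 v x) :
    hessGradSq v x - lap v x * infLap v x = -(gradSq v x * detHess v x) := by
  simp only [hessGradSq, lap, infLap, gradSq, detHess, hsymm]
  ring

theorem jdet_rpow_gradNorm_mul_pd (hv : ContDiffAt ℝ 2 v x) (hgrad : gradSq v x ≠ 0) (β : ℝ) :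
    jdet (fun i y => gradNorm v y ^ β * pd i v y) x
      = (β + 1) * gradNorm v x ^ (2 * β - 2) * gradSq v x * detHess v x := by
  have hn := gradNorm_pos hgrad
  have hpow : gradNorm v x ^ (2 * β - 2) = (gradNorm v x ^ (β - 2)) ^ 2 * gradSq v x := by
    rw [← sq_gradNorm, ← rpow_natCast, ← rpow_natCast, ← rpow_mul hn.le, ← rpow_add hn]
    congr 1
    push_cast
    ring
  simp only [jdet, pd_rpow_gradNorm_mul_pd hv hgrad, hpow, hessGrad, detHess, gradSq,
    pd2_comm hv 1 0]
  ring

end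

/-- −det DG = (β+1)|Dv|^{2β−2}(|D²vDv|² − Δv Δ∞v) where G = |Dv|^β Dv,
at a point where Dv ≠ 0. -/
theorem stmt_13 (Ω : Set E2) (hΩ : IsOpen Ω) (v : E2 → ℝ)
    (hv : ContDiffOn ℝ (⊤ : ℕ∞) v Ω) (β : ℝ)
    (x : E2) (hx : x ∈ Ω) (hgrad : gradSq v x ≠ 0) :
    -jdet (fun i y => gradNorm v y ^ β * pd i v y) x
      = (β + 1) * gradNorm v x ^ (2*β - 2)
          * (hessGradSq v x - lap v x * infLap v x) := by
  have hv2 : ContDiffAt ℝ 2 v x :=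
    (hv.contDiffAt (hΩ.mem_nhds hx)).of_le (by norm_cast)
  rw [jdet_rpow_gradNorm_mul_pd hv2 hgrad, hessGradSq_sub_lap_mul_infLap (pd2_comm hv2 1 0)]
  ring
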